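/- The Zero-Sum Cut Defense decision problem is NP-hard: there is a polynomial-time reduction from Knapsack such that a set of items with total value ≥ U and total weight ≤ H exists if and only if in the constructed chain-of-triangles instance the defender can publish weights achieving attack probability zero (forcing the minimum attack cost to be at least U when the attacker's budget is U−1) with total defender cost increase at most H over the unperturbed cost. -/

import Mathlib

open SimpleGraph

/-- Length of a walk with respect to edge weights `w`. -/
noncomputable def walkLen {V : Type*} {G : SimpleGraph V} (w : Sym2 V → ℝ) {s t : V}
    (p : G.Walk s t) : ℝ := (p.edges.map w).sum

/-- Vertices of the chain-of-triangles gadget: `Sum.inl i` is `u_i`, `Sum.inr i` is `ω_{i+1}`. -/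
abbrev CV (n : ℕ) := Fin (n + 1) ⊕ Fin n

/-- The bottom edge `{u_{i-1}, u_i}` of the `i`-th triangle (on the target path). -/
def botE (n : ℕ) (i : Fin n) : Sym2 (CV n) := s(Sum.inl i.castSucc, Sum.inl i.succ)

/-- The detour edge `{u_{i-1}, ω_i}` of the `i`-th triangle. -/
def d1E (n : ℕ) (i : Fin n) : Sym2 (CV n) := s(Sum.inl i.castSucc, Sum.inr i)

/-- The detour edge `{ω_i, u_i}` of the `i`-th triangle. -/
def d2E (n : ℕ) (i : Fin n) : Sym2 (CV n) := s(Sum.inr i, Sum.inl i.succ)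

/-- The chain-of-triangles gadget graph. -/
def chainGraph (n : ℕ) : SimpleGraph (CV n) :=
  SimpleGraph.fromEdgeSet {e | ∃ i : Fin n, e = botE n i ∨ e = d1E n i ∨ e = d2E n i}

/-- Source `s = u_0`. -/
def src (n : ℕ) : CV n := Sum.inl 0

/-- Destination `t = u_n`. -/
def dst (n : ℕ) : CV n := Sum.inl (Fin.last n)

/-- An attack on the chain gadget: removable edges lie in the graph, no bottom edge
(edge of `p*`) is removed, and afterwards every simple `s`–`t` path other than the bottom
path `p*` (i.e. any path visiting some detour vertex `ω_i`) is strictly longer than `p*`. -/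
def IsChainAttack (n : ℕ) (w' : Sym2 (CV n) → ℝ) (E' : Finset (Sym2 (CV n))) : Prop :=
  ↑E' ⊆ (chainGraph n).edgeSet ∧ (∀ i : Fin n, botE n i ∉ E') ∧
    ∀ q : ((chainGraph n).deleteEdges ↑E').Walk (src n) (dst n), q.IsPath →
      (∃ i : Fin n, Sum.inr i ∈ q.support) →
      ∑ i : Fin n, w' (botE n i) < walkLen w' q

/-!
Every `s`–`t` path crosses the cuts just before and just after `ω_i`, so in each triangle it
uses the bottom edge or both detour edges; its length is therefore at least
`∑ i, min (w' (botE n i)) (w' (d1E n i) + w' (d2E n i))`.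

Given a knapsack solution `S`, lengthen the bottom edge of each triangle `i ∈ S` by `η_i`. Its
detour is then exactly as long as the bottom edge, so every attack must cut a detour edge of each
`i ∈ S` and pays at least `∑_{i∈S} ν_i ≥ U`, while `p*` has length `n + ∑_{i∈S} η_i`.

Conversely, given published weights `w' ≥ w`, let `S` be the triangles whose detour is no longer
than their bottom edge. Once the first detour edge of every `i ∈ S` is cut, each remaining detour
is strictly longer than its bottom edge, so this is an attack and `∑_{i∈S} ν_i ≥ U`; and by the
bound above any published path has length at least `n + ∑_{i∈S} η_i`.
-/

lemma walkLen_transfer {V : Type*} {G H : SimpleGraph V} {u v : V} (w : Sym2 V → ℝ)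
    (p : G.Walk u v) (hp : ∀ e ∈ p.edges, e ∈ H.edgeSet) :
    walkLen w (p.transfer H hp) = walkLen w p := by
  simp [walkLen, Walk.edges_transfer]

lemma SimpleGraph.Walk.IsPath.walkLen_eq_sum {V : Type*} [DecidableEq V] {G : SimpleGraph V}
    {u v : V} {p : G.Walk u v} (hp : p.IsPath) (w : Sym2 V → ℝ) :
    walkLen w p = ∑ e ∈ p.edges.toFinset, w e :=
  (List.sum_toFinset w hp.edges_nodup).symm

section ChainGraph

variable {n : ℕ}

@[simp] lemma botE_inj {i j : Fin n} : botE n i = botE n j ↔ i = j := by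
  simp [botE, Fin.ext_iff]; omega

@[simp] lemma d1E_inj {i j : Fin n} : d1E n i = d1E n j ↔ i = j := by
  simp [d1E, Fin.ext_iff]

@[simp] lemma d2E_inj {i j : Fin n} : d2E n i = d2E n j ↔ i = j := by
  simp [d2E, Fin.ext_iff]

@[simp] lemma botE_ne_d1E {i j : Fin n} : botE n i ≠ d1E n j := by
  simp [botE, d1E]

@[simp] lemma botE_ne_d2E {i j : Fin n} : botE n i ≠ d2E n j := by
  simp [botE, d2E]

@[simp] lemma d1E_ne_d2E {i j : Fin n} : d1E n i ≠ d2E n j := by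
  simp [d1E, d2E, Fin.ext_iff]; omega

@[simp] lemma d1E_ne_botE {i j : Fin n} : d1E n i ≠ botE n j := botE_ne_d1E.symm

@[simp] lemma d2E_ne_botE {i j : Fin n} : d2E n i ≠ botE n j := botE_ne_d2E.symm

@[simp] lemma d2E_ne_d1E {i j : Fin n} : d2E n i ≠ d1E n j := d1E_ne_d2E.symm

def triangle (n : ℕ) (i : Fin n) : Finset (Sym2 (CV n)) := {botE n i, d1E n i, d2E n i}

lemma eq_of_mem_triangle {i j : Fin n} {e : Sym2 (CV n)} (hi : e ∈ triangle n i)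
    (hj : e ∈ triangle n j) : i = j := by
  simp only [triangle, Finset.mem_insert, Finset.mem_singleton] at hi hj
  rcases hi with rfl | rfl | rfl <;> simpa using hj

lemma mem_edgeSet_chainGraph {e : Sym2 (CV n)} :
    e ∈ (chainGraph n).edgeSet ↔ ∃ i, e ∈ triangle n i := by
  simp only [chainGraph, edgeSet_fromEdgeSet, triangle, Finset.mem_insert,
    Finset.mem_singleton, Set.mem_sdiff, Set.mem_ofPred_eq, and_iff_left_iff_imp]
  rintro ⟨i, rfl | rfl | rfl⟩ <;> simp [botE, d1E, d2E, Sym2.IsDiag, Fin.ext_iff]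

lemma chainGraph_adj {x y : CV n} :
    (chainGraph n).Adj x y ↔ ∃ i, s(x, y) ∈ triangle n i := by
  rw [← mem_edgeSet, mem_edgeSet_chainGraph]

lemma botE_mem_triangle (i : Fin n) : botE n i ∈ triangle n i := by simp [triangle]
lemma d1E_mem_triangle (i : Fin n) : d1E n i ∈ triangle n i := by simp [triangle]
lemma d2E_mem_triangle (i : Fin n) : d2E n i ∈ triangle n i := by simp [triangle]

lemma forall_mem_triangle {i : Fin n} {P : Sym2 (CV n) → Prop} :
    (∀ e ∈ triangle n i, P e) ↔ P (botE n i) ∧ P (d1E n i) ∧ P (d2E n i) := by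
  simp [triangle]

lemma adj_botE (i : Fin n) : (chainGraph n).Adj (Sum.inl i.castSucc) (Sum.inl i.succ) :=
  chainGraph_adj.2 ⟨i, botE_mem_triangle i⟩

lemma adj_d1E (i : Fin n) : (chainGraph n).Adj (Sum.inl i.castSucc) (Sum.inr i) :=
  chainGraph_adj.2 ⟨i, d1E_mem_triangle i⟩

lemma adj_d2E (i : Fin n) : (chainGraph n).Adj (Sum.inr i) (Sum.inl i.succ) :=
  chainGraph_adj.2 ⟨i, d2E_mem_triangle i⟩

-- Position along the chain `u₀, ω₁, u₁, ω₂, …`; its sublevel sets are the cuts of the chain.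
def chainRank : CV n → ℕ := Sum.elim (fun j => 2 * j) (fun j => 2 * j + 1)

lemma exists_crossing_edge (q : (chainGraph n).Walk (src n) (dst n)) {m : ℕ} (hm : m < 2 * n) :
    ∃ x y, s(x, y) ∈ q.edges ∧ (chainGraph n).Adj x y ∧ chainRank x ≤ m ∧ m < chainRank y := by
  obtain ⟨d, hd, hfst, hsnd⟩ := q.exists_boundary_dart {x | chainRank x ≤ m}
    (by simp [src, chainRank]) (by simpa [dst, chainRank] using hm)
  exact ⟨d.fst, d.snd, List.mem_map_of_mem hd, d.adj, hfst, not_le.1 hsnd⟩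

lemma exists_crossing_edge_of_triangle (q : (chainGraph n).Walk (src n) (dst n)) (i : Fin n) {m : ℕ}
    (hm : m = 2 * i ∨ m = 2 * i + 1) :
    ∃ e ∈ q.edges, e = botE n i ∨ (m = 2 * i ∧ e = d1E n i) ∨ (m = 2 * i + 1 ∧ e = d2E n i) := by
  obtain ⟨x, y, hq, hxy, hx, hy⟩ := exists_crossing_edge q (m := m) (by omega)
  refine ⟨_, hq, ?_⟩
  obtain ⟨j, hj⟩ := chainGraph_adj.1 hxy
  simp only [triangle, botE, d1E, d2E, Finset.mem_insert, Finset.mem_singleton,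
    Sym2.eq_iff] at hj
  rcases hj with (⟨rfl, rfl⟩ | ⟨rfl, rfl⟩) | (⟨rfl, rfl⟩ | ⟨rfl, rfl⟩) |
      (⟨rfl, rfl⟩ | ⟨rfl, rfl⟩) <;> simp only [chainRank, Sum.elim_inl, Sum.elim_inr,
      Fin.val_castSucc, Fin.val_succ] at hx hy <;>
    first
    | omega
    | obtain rfl : j = i := by ext; omega
      simp [botE, d1E, d2E] <;> omega

lemma botE_mem_edges_or (q : (chainGraph n).Walk (src n) (dst n)) (i : Fin n) :
    botE n i ∈ q.edges ∨ (d1E n i ∈ q.edges ∧ d2E n i ∈ q.edges) := by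
  refine or_iff_not_imp_left.2 fun hbot => ⟨?_, ?_⟩
  · obtain ⟨e, he, rfl | ⟨-, rfl⟩ | ⟨h, -⟩⟩ := exists_crossing_edge_of_triangle q i (.inl rfl)
    exacts [absurd he hbot, he, by omega]
  · obtain ⟨e, he, rfl | ⟨h, -⟩ | ⟨-, rfl⟩⟩ := exists_crossing_edge_of_triangle q i (.inr rfl)
    exacts [absurd he hbot, by omega, he]

lemma d1E_or_d2E_mem_edges {u v : CV n} (q : (chainGraph n).Walk u v) {i : Fin n}
    (hv : v ≠ Sum.inr i) (hi : Sum.inr i ∈ q.support) :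
    d1E n i ∈ q.edges ∨ d2E n i ∈ q.edges := by
  obtain ⟨e, he, hie⟩ := (Walk.mem_support_iff_exists_mem_edges.1 hi).resolve_left hv.symm
  obtain ⟨j, hj⟩ := mem_edgeSet_chainGraph.1 (q.edges_subset_edgeSet he)
  simp only [triangle, Finset.mem_insert, Finset.mem_singleton] at hj
  rcases hj with rfl | rfl | rfl <;> simp [botE, d1E, d2E] at hie
  · exact .inl (hie ▸ he)
  · exact .inr (hie ▸ he)

noncomputable def triangleLen {u v : CV n} (w : Sym2 (CV n) → ℝ) (q : (chainGraph n).Walk u v)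
    (i : Fin n) : ℝ :=
  ∑ e ∈ (triangle n i).filter (· ∈ q.edges), w e

lemma walkLen_eq_sum_triangleLen {u v : CV n} {q : (chainGraph n).Walk u v} (hq : q.IsPath)
    (w : Sym2 (CV n) → ℝ) : walkLen w q = ∑ i, triangleLen w q i := by
  have hedges : q.edges.toFinset =
      Finset.univ.biUnion fun i => (triangle n i).filter (· ∈ q.edges) := by
    ext e
    simp only [List.mem_toFinset, Finset.mem_biUnion, Finset.mem_univ, true_and,
      Finset.mem_filter]
    exact ⟨fun he => (mem_edgeSet_chainGraph.1 (q.edges_subset_edgeSet he)).imp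
      fun _ hi => ⟨hi, he⟩, fun ⟨_, _, he⟩ => he⟩
  rw [hq.walkLen_eq_sum, hedges, Finset.sum_biUnion]
  · rfl
  · intro i _ j _ hij
    exact Finset.disjoint_left.2 fun e hi hj =>
      hij (eq_of_mem_triangle (Finset.mem_filter.1 hi).1 (Finset.mem_filter.1 hj).1)

lemma sum_le_triangleLen {u v : CV n} {w : Sym2 (CV n) → ℝ} {q : (chainGraph n).Walk u v}
    {i : Fin n} (hw : ∀ e ∈ triangle n i, 0 ≤ w e) {F : Finset (Sym2 (CV n))}
    (hF : F ⊆ triangle n i) (hFq : ∀ e ∈ F, e ∈ q.edges) : ∑ e ∈ F, w e ≤ triangleLen w q i :=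
  Finset.sum_le_sum_of_subset_of_nonneg (fun e he => Finset.mem_filter.2 ⟨hF he, hFq e he⟩)
    fun e he _ => hw e (Finset.mem_filter.1 he).1

lemma min_le_triangleLen {w : Sym2 (CV n) → ℝ} (q : (chainGraph n).Walk (src n) (dst n))
    {i : Fin n} (hw : ∀ e ∈ triangle n i, 0 ≤ w e) :
    min (w (botE n i)) (w (d1E n i) + w (d2E n i)) ≤ triangleLen w q i := by
  rcases botE_mem_edges_or q i with hbot | ⟨hd1, hd2⟩
  · refine (min_le_left _ _).trans ?_
    simpa using sum_le_triangleLen hw (F := {botE n i}) (by simp [triangle]) (by simpa using hbot)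
  · refine (min_le_right _ _).trans ?_
    simpa [Finset.sum_pair d1E_ne_d2E] using
      sum_le_triangleLen hw (F := {d1E n i, d2E n i}) (by simp [triangle])
        (by simp [hd1, hd2])

lemma sum_min_le_walkLen {w : Sym2 (CV n) → ℝ} (hw : ∀ i, ∀ e ∈ triangle n i, 0 ≤ w e)
    {q : (chainGraph n).Walk (src n) (dst n)} (hq : q.IsPath) :
    ∑ i, min (w (botE n i)) (w (d1E n i) + w (d2E n i)) ≤ walkLen w q := by
  rw [walkLen_eq_sum_triangleLen hq]
  exact Finset.sum_le_sum fun i _ => min_le_triangleLen q (hw i)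

lemma botE_le_triangleLen {w : Sym2 (CV n) → ℝ} (q : (chainGraph n).Walk (src n) (dst n))
    {i : Fin n} (hw : ∀ e ∈ triangle n i, 0 ≤ w e)
    (hdetour : d1E n i ∈ q.edges → w (botE n i) ≤ w (d1E n i) + w (d2E n i)) :
    w (botE n i) ≤ triangleLen w q i := by
  rcases botE_mem_edges_or q i with hbot | ⟨hd1, hd2⟩
  · simpa using sum_le_triangleLen hw (F := {botE n i}) (by simp [triangle]) (by simpa using hbot)
  · refine (hdetour hd1).trans ?_
    simpa [Finset.sum_pair d1E_ne_d2E] using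
      sum_le_triangleLen hw (F := {d1E n i, d2E n i}) (by simp [triangle]) (by simp [hd1, hd2])

lemma botE_lt_triangleLen {w : Sym2 (CV n) → ℝ} (q : (chainGraph n).Walk (src n) (dst n))
    {i : Fin n} (hw : ∀ e ∈ triangle n i, 0 ≤ w e) (hd1 : 0 < w (d1E n i)) (hd2 : 0 < w (d2E n i))
    (hdetour : d1E n i ∈ q.edges → w (botE n i) < w (d1E n i) + w (d2E n i))
    (hvisit : Sum.inr i ∈ q.support) : w (botE n i) < triangleLen w q i := by
  rcases botE_mem_edges_or q i with hbot | ⟨hd1q, hd2q⟩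
  · obtain ⟨d, hd, hdq, hdpos, hdne⟩ :
        ∃ d ∈ triangle n i, d ∈ q.edges ∧ 0 < w d ∧ d ≠ botE n i := by
      rcases d1E_or_d2E_mem_edges q (by simp [dst]) hvisit with h | h
      exacts [⟨_, by simp [triangle], h, hd1, by simp⟩, ⟨_, by simp [triangle], h, hd2, by simp⟩]
    calc w (botE n i) < w (botE n i) + w d := by linarith
      _ = ∑ e ∈ {botE n i, d}, w e := by rw [Finset.sum_pair hdne.symm]
      _ ≤ triangleLen w q i := sum_le_triangleLen hw
            (Finset.insert_subset_iff.2 ⟨botE_mem_triangle i, Finset.singleton_subset_iff.2 hd⟩)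
            (by simp [hbot, hdq])
  · refine (hdetour hd1q).trans_le ?_
    simpa [Finset.sum_pair d1E_ne_d2E] using
      sum_le_triangleLen hw (F := {d1E n i, d2E n i}) (by simp [triangle]) (by simp [hd1q, hd2q])

def routePrefix (T : Finset (Fin n)) :
    (k : Fin (n + 1)) → (chainGraph n).Walk (src n) (Sum.inl k) :=
  Fin.induction Walk.nil fun i p =>
    if i ∈ T then (p.concat (adj_d1E i)).concat (adj_d2E i) else p.concat (adj_botE i)

def route (T : Finset (Fin n)) : (chainGraph n).Walk (src n) (dst n) := routePrefix T (Fin.last n)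

def routeEdges (T : Finset (Fin n)) (i : Fin n) : Finset (Sym2 (CV n)) :=
  if i ∈ T then {d1E n i, d2E n i} else {botE n i}

@[simp] lemma edges_routePrefix_zero (T : Finset (Fin n)) : (routePrefix T 0).edges = [] := rfl

@[simp] lemma support_routePrefix_zero (T : Finset (Fin n)) :
    (routePrefix T 0).support = [src n] := rfl

lemma routePrefix_succ (T : Finset (Fin n)) (i : Fin n) :
    routePrefix T i.succ = if i ∈ T then
      ((routePrefix T i.castSucc).concat (adj_d1E i)).concat (adj_d2E i)
    else (routePrefix T i.castSucc).concat (adj_botE i) :=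
  Fin.induction_succ _ _ i

lemma mem_edges_routePrefix {T : Finset (Fin n)} {k : Fin (n + 1)} {e : Sym2 (CV n)} :
    e ∈ (routePrefix T k).edges ↔ ∃ i : Fin n, (i : ℕ) < k ∧ e ∈ routeEdges T i := by
  induction k using Fin.induction with
  | zero => simp
  | succ j ih =>
    have hlt : ∀ i : Fin n, (i : ℕ) < j.succ ↔ (i : ℕ) < j.castSucc ∨ i = j := by
      intro i; simp [Fin.ext_iff]; omega
    simp only [hlt, or_and_right, exists_or, ← ih, exists_eq_left]
    rw [routePrefix_succ]
    split_ifs with hj <;> simp [Walk.edges_concat, routeEdges, hj, botE, d1E, d2E]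

lemma chainRank_le_of_mem_support_routePrefix {T : Finset (Fin n)} {k : Fin (n + 1)} {x : CV n}
    (hx : x ∈ (routePrefix T k).support) : chainRank x ≤ 2 * k := by
  induction k using Fin.induction with
  | zero =>
    simp only [support_routePrefix_zero, List.mem_singleton] at hx
    simp [hx, src, chainRank]
  | succ j ih =>
    rw [routePrefix_succ] at hx
    split_ifs at hx <;> simp only [Walk.support_concat, List.mem_append,
      List.mem_singleton] at hx
    · rcases hx with (hx | rfl) | rfl
      · have := ih hx; simp only [Fin.val_castSucc, Fin.val_succ] at this ⊢; omega
      all_goals simp [chainRank]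
    · rcases hx with hx | rfl
      · have := ih hx; simp only [Fin.val_castSucc, Fin.val_succ] at this ⊢; omega
      · simp [chainRank]

lemma routePrefix_isPath (T : Finset (Fin n)) (k : Fin (n + 1)) : (routePrefix T k).IsPath := by
  induction k using Fin.induction with
  | zero => exact .nil
  | succ j ih =>
    have hnot : ∀ x, (2 * j : ℕ) < chainRank x → x ∉ (routePrefix T j.castSucc).support :=
      fun x hx hmem => by
        have := chainRank_le_of_mem_support_routePrefix hmem
        simp only [Fin.val_castSucc] at this
        omega
    rw [routePrefix_succ]
    split_ifs
    · refine (ih.concat (hnot _ (by simp [chainRank])) _).concat ?_ _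
      simp only [Walk.support_concat, List.mem_append, List.mem_singleton, reduceCtorEq,
        or_false]
      exact hnot _ (by simp [chainRank])
    · exact ih.concat (hnot _ (by simp [chainRank])) _

lemma route_isPath (T : Finset (Fin n)) : (route T).IsPath := routePrefix_isPath T _

lemma mem_edges_route {T : Finset (Fin n)} {e : Sym2 (CV n)} :
    e ∈ (route T).edges ↔ ∃ i, e ∈ routeEdges T i :=
  mem_edges_routePrefix.trans (by simp)

lemma routeEdges_subset_triangle (T : Finset (Fin n)) (i : Fin n) :
    routeEdges T i ⊆ triangle n i := by
  unfold routeEdges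
  split_ifs <;> simp [triangle]

lemma walkLen_route (w : Sym2 (CV n) → ℝ) (T : Finset (Fin n)) :
    walkLen w (route T) =
      ∑ i, if i ∈ T then w (d1E n i) + w (d2E n i) else w (botE n i) := by
  rw [walkLen_eq_sum_triangleLen (route_isPath T)]
  refine Finset.sum_congr rfl fun i _ => ?_
  have hfilter : (triangle n i).filter (· ∈ (route T).edges) = routeEdges T i := by
    ext e
    simp only [Finset.mem_filter, mem_edges_route]
    refine ⟨fun ⟨hi, j, hj⟩ => ?_, fun he => ⟨routeEdges_subset_triangle T i he, i, he⟩⟩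
    rwa [eq_of_mem_triangle hi (routeEdges_subset_triangle T j hj)]
  rw [triangleLen, hfilter, routeEdges]
  split_ifs <;> simp [Finset.sum_pair d1E_ne_d2E]

lemma IsChainAttack.d1E_mem_or_d2E_mem {w' : Sym2 (CV n) → ℝ} {E' : Finset (Sym2 (CV n))}
    (hE' : IsChainAttack n w' E') {i : Fin n}
    (hi : w' (d1E n i) + w' (d2E n i) ≤ w' (botE n i)) : d1E n i ∈ E' ∨ d2E n i ∈ E' := by
  by_contra! hmiss
  have havoid : ∀ e ∈ (route {i}).edges, e ∉ (E' : Set (Sym2 (CV n))) := by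
    intro e he
    obtain ⟨j, hj⟩ := mem_edges_route.1 he
    unfold routeEdges at hj
    split_ifs at hj with hji
    · obtain rfl := Finset.mem_singleton.1 hji
      simp only [Finset.mem_insert, Finset.mem_singleton] at hj
      rcases hj with rfl | rfl
      exacts [hmiss.1, hmiss.2]
    · obtain rfl := Finset.mem_singleton.1 hj
      exact hE'.2.1 j
  have hvisit : Sum.inr i ∈ ((route {i}).toDeleteEdges _ havoid).support := by
    have hd1 : d1E n i ∈ (route {i}).edges := mem_edges_route.2 ⟨i, by simp [routeEdges]⟩
    rw [Walk.support_transfer]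
    exact (route {i}).snd_mem_support_of_mem_edges hd1
  have hlong := hE'.2.2 _ (Walk.IsPath.toDeleteEdges _ _ (route_isPath {i}) havoid) ⟨i, hvisit⟩
  rw [walkLen_transfer, walkLen_route] at hlong
  refine hlong.not_ge (Finset.sum_le_sum fun j _ => ?_)
  split_ifs with hj
  · rwa [Finset.mem_singleton.1 hj]
  · exact le_rfl

lemma sum_le_sum_of_hits {E' : Finset (Sym2 (CV n))} (hE' : ↑E' ⊆ (chainGraph n).edgeSet)
    (hbot : ∀ i, botE n i ∉ E') {c : Sym2 (CV n) → ℝ} {ν : Fin n → ℝ} (hν : ∀ i, 0 ≤ ν i)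
    (hc1 : ∀ i, c (d1E n i) = ν i) (hc2 : ∀ i, c (d2E n i) = ν i) {S : Finset (Fin n)}
    (hhit : ∀ i ∈ S, d1E n i ∈ E' ∨ d2E n i ∈ E') : ∑ i ∈ S, ν i ≤ ∑ e ∈ E', c e := by
  let hit : Fin n → Sym2 (CV n) := fun i => if d1E n i ∈ E' then d1E n i else d2E n i
  have hc : ∀ i, c (hit i) = ν i := fun i => by
    simp only [hit]; split_ifs; exacts [hc1 i, hc2 i]
  have hinj : Set.InjOn hit S := fun a _ b _ hab => by
    simp only [hit] at hab
    split_ifs at hab <;> simp_all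
  have hsub : S.image hit ⊆ E' := by
    simp only [Finset.image_subset_iff, hit]
    intro i hi
    split_ifs with h
    exacts [h, (hhit i hi).resolve_left h]
  have hnonneg : ∀ e ∈ E', 0 ≤ c e := fun e he => by
    obtain ⟨i, hi⟩ := mem_edgeSet_chainGraph.1 (hE' he)
    simp only [triangle, Finset.mem_insert, Finset.mem_singleton] at hi
    rcases hi with rfl | rfl | rfl
    exacts [absurd he (hbot i), (hc1 i).symm ▸ hν i, (hc2 i).symm ▸ hν i]
  calc ∑ i ∈ S, ν i = ∑ e ∈ S.image hit, c e := by
        rw [Finset.sum_image hinj]; exact Finset.sum_congr rfl fun i _ => (hc i).symm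
    _ ≤ ∑ e ∈ E', c e := Finset.sum_le_sum_of_subset_of_nonneg hsub fun e he _ => hnonneg e he

lemma isChainAttack_image_d1E {w : Sym2 (CV n) → ℝ} (hbot : ∀ i, 0 ≤ w (botE n i))
    (hd1 : ∀ i, 0 < w (d1E n i)) (hd2 : ∀ i, 0 < w (d2E n i)) {S : Finset (Fin n)}
    (hS : ∀ i ∉ S, w (botE n i) < w (d1E n i) + w (d2E n i)) :
    IsChainAttack n w (S.image (d1E n)) := by
  have hw : ∀ i, ∀ e ∈ triangle n i, 0 ≤ w e :=
    fun i => forall_mem_triangle.2 ⟨hbot i, (hd1 i).le, (hd2 i).le⟩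
  refine ⟨?_, fun i => by simp, fun qd hqd ⟨i₀, hi₀⟩ => ?_⟩
  · intro e he
    obtain ⟨i, -, rfl⟩ := Finset.mem_image.1 he
    exact mem_edgeSet_chainGraph.2 ⟨i, d1E_mem_triangle i⟩
  have hsub : ∀ e ∈ qd.edges, e ∈ (chainGraph n).edgeSet := fun e he =>
    edgeSet_mono (deleteEdges_le _) (qd.edges_subset_edgeSet he)
  set q := qd.transfer (chainGraph n) hsub
  have hdetour : ∀ i, d1E n i ∈ q.edges → w (botE n i) < w (d1E n i) + w (d2E n i) := by
    intro i hi
    refine hS i fun hiS => ?_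
    have := qd.edges_subset_edgeSet (by rwa [Walk.edges_transfer] at hi)
    rw [edgeSet_deleteEdges] at this
    exact this.2 (Finset.mem_image_of_mem _ hiS)
  rw [← walkLen_transfer w qd hsub, walkLen_eq_sum_triangleLen (hqd.transfer hsub)]
  refine Finset.sum_lt_sum (fun i _ => botE_le_triangleLen q (hw i) fun h => (hdetour i h).le)
    ⟨i₀, Finset.mem_univ _, botE_lt_triangleLen q (hw i₀) (hd1 i₀) (hd2 i₀) (hdetour i₀) ?_⟩
  rwa [Walk.support_transfer]

noncomputable def raiseBottom (w : Sym2 (CV n) → ℝ) (η : Fin n → ℝ) (S : Finset (Fin n)) :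
    Sym2 (CV n) → ℝ :=
  fun e => w e + ∑ i ∈ S, if e = botE n i then η i else 0

lemma le_raiseBottom (w : Sym2 (CV n) → ℝ) {η : Fin n → ℝ} (hη : ∀ i, 0 ≤ η i)
    (S : Finset (Fin n)) (e : Sym2 (CV n)) : w e ≤ raiseBottom w η S e :=
  le_add_of_nonneg_right (Finset.sum_nonneg fun i _ => by split_ifs; exacts [hη i, le_rfl])

@[simp] lemma raiseBottom_botE (w : Sym2 (CV n) → ℝ) (η : Fin n → ℝ) (S : Finset (Fin n))
    (i : Fin n) : raiseBottom w η S (botE n i) = w (botE n i) + if i ∈ S then η i else 0 := by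
  simp [raiseBottom, Finset.sum_ite_eq]

@[simp] lemma raiseBottom_d1E (w : Sym2 (CV n) → ℝ) (η : Fin n → ℝ) (S : Finset (Fin n))
    (i : Fin n) : raiseBottom w η S (d1E n i) = w (d1E n i) := by
  simp [raiseBottom]

@[simp] lemma raiseBottom_d2E (w : Sym2 (CV n) → ℝ) (η : Fin n → ℝ) (S : Finset (Fin n))
    (i : Fin n) : raiseBottom w η S (d2E n i) = w (d2E n i) := by
  simp [raiseBottom]

lemma sum_one_add_ite (S : Finset (Fin n)) (a : Fin n → ℝ) :
    ∑ i, (1 + if i ∈ S then a i else 0) = n + ∑ i ∈ S, a i := by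
  simp [Finset.sum_add_distrib, Finset.sum_ite_mem]

noncomputable def cheapDetours (w : Sym2 (CV n) → ℝ) : Finset (Fin n) :=
  Finset.univ.filter fun i => w (d1E n i) + w (d2E n i) ≤ w (botE n i)

lemma add_sum_cheapDetours_le_walkLen {w : Sym2 (CV n) → ℝ} {a : Fin n → ℝ}
    (hbot : ∀ i, 1 ≤ w (botE n i)) (hd1 : ∀ i, 1 ≤ w (d1E n i)) (hd2 : ∀ i, a i ≤ w (d2E n i))
    (ha : ∀ i, 0 ≤ a i) {q : (chainGraph n).Walk (src n) (dst n)} (hq : q.IsPath) :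
    n + ∑ i ∈ cheapDetours w, a i ≤ walkLen w q := by
  have hw : ∀ i, ∀ e ∈ triangle n i, 0 ≤ w e := fun i =>
    forall_mem_triangle.2 ⟨by linarith [hbot i], by linarith [hd1 i], by linarith [hd2 i, ha i]⟩
  rw [← sum_one_add_ite]
  refine (Finset.sum_le_sum fun i _ => ?_).trans (sum_min_le_walkLen hw hq)
  by_cases hi : i ∈ cheapDetours w
  · have hcheap := (Finset.mem_filter.1 hi).2
    rw [if_pos hi]
    exact le_min (by linarith [hd1 i, hd2 i]) (by linarith [hd1 i, hd2 i])
  · rw [if_neg hi, add_zero]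
    exact le_min (hbot i) (by linarith [hd1 i, hd2 i, ha i])

end ChainGraph

theorem stmt7_general (n : ℕ) (ν η : Fin n → ℕ) (hη : ∀ i, 0 < η i)
    (U H : ℕ) (w c : Sym2 (CV n) → ℝ)
    (hwbot : ∀ i, w (botE n i) = 1) (hwd1 : ∀ i, w (d1E n i) = 1)
    (hwd2 : ∀ i, w (d2E n i) = (η i : ℝ))
    (hc1 : ∀ i, c (d1E n i) = (ν i : ℝ)) (hc2 : ∀ i, c (d2E n i) = (ν i : ℝ)) :
    (∃ S : Finset (Fin n),
        (U : ℝ) ≤ ∑ i ∈ S, (ν i : ℝ) ∧ ∑ i ∈ S, (η i : ℝ) ≤ (H : ℝ)) ↔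
      ∃ w' : Sym2 (CV n) → ℝ, (∀ e, w e ≤ w' e) ∧
        (∀ E', IsChainAttack n w' E' → (U : ℝ) ≤ ∑ e ∈ E', c e) ∧
        (∃ q : (chainGraph n).Walk (src n) (dst n), q.IsPath ∧
          walkLen w' q ≤ (n : ℝ) + (H : ℝ)) := by
  constructor
  · rintro ⟨S, hU, hH⟩
    refine ⟨raiseBottom w (fun i => η i) S, le_raiseBottom w (fun i => Nat.cast_nonneg _) S,
      fun E' hE' => hU.trans (sum_le_sum_of_hits hE'.1 hE'.2.1 (fun i => Nat.cast_nonneg _) hc1 hc2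
        fun i hi => hE'.d1E_mem_or_d2E_mem ?_), route ∅, route_isPath ∅, ?_⟩
    · simp [hwbot, hwd1, hwd2, hi, add_comm]
    · simpa [walkLen_route, hwbot, sum_one_add_ite] using hH
  · rintro ⟨w', hle, hatt, q, hq, hqlen⟩
    have hbot : ∀ i, 1 ≤ w' (botE n i) := fun i => hwbot i ▸ hle _
    have hd1 : ∀ i, 1 ≤ w' (d1E n i) := fun i => hwd1 i ▸ hle _
    have hd2 : ∀ i, (η i : ℝ) ≤ w' (d2E n i) := fun i => hwd2 i ▸ hle _
    have hη' : ∀ i, (1 : ℝ) ≤ η i := fun i => by exact_mod_cast hη i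
    refine ⟨cheapDetours w', ?_, ?_⟩
    · have hcost := hatt _ (isChainAttack_image_d1E (S := cheapDetours w')
        (fun i => by linarith [hbot i]) (fun i => by linarith [hd1 i])
        (fun i => by linarith [hd2 i, hη' i]) fun i hi => by simpa [cheapDetours] using hi)
      rwa [Finset.sum_image fun a _ b _ => d1E_inj.1, Finset.sum_congr rfl fun i _ => hc1 i]
        at hcost
    · linarith [add_sum_cheapDetours_le_walkLen hbot hd1 hd2 (fun i => Nat.cast_nonneg (η i)) hq]

/-- NP-hardness reduction core (Zero-Sum Cut Defense): in the chain-of-triangles instance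
built from a Knapsack instance (bottom edges of weight 1 and cost 1; detour edges of
weights `1` and `η_i` and removal cost `ν_i` each; target path the bottom chain; attacker
budget `U − 1`; `f₊ = 1`), there is a knapsack solution of value ≥ `U` and weight ≤ `H`
iff the defender can publish weights `w' ≥ w` forcing every attack to cost at least `U`
(attack probability zero) while keeping the published shortest `s`–`t` distance — hence
the defender's cost increase over the unperturbed cost `n` — at most `H`. -/
theorem stmt7 (n : ℕ) (ν η : Fin n → ℕ) (hν : ∀ i, 0 < ν i) (hη : ∀ i, 0 < η i)
    (U H : ℕ) (w c : Sym2 (CV n) → ℝ)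
    (hwbot : ∀ i, w (botE n i) = 1) (hwd1 : ∀ i, w (d1E n i) = 1)
    (hwd2 : ∀ i, w (d2E n i) = (η i : ℝ))
    (hc1 : ∀ i, c (d1E n i) = (ν i : ℝ)) (hc2 : ∀ i, c (d2E n i) = (ν i : ℝ)) :
    (∃ S : Finset (Fin n),
        (U : ℝ) ≤ ∑ i ∈ S, (ν i : ℝ) ∧ ∑ i ∈ S, (η i : ℝ) ≤ (H : ℝ)) ↔
      ∃ w' : Sym2 (CV n) → ℝ, (∀ e, w e ≤ w' e) ∧
        (∀ E', IsChainAttack n w' E' → (U : ℝ) ≤ ∑ e ∈ E', c e) ∧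
        (∃ q : (chainGraph n).Walk (src n) (dst n), q.IsPath ∧
          walkLen w' q ≤ (n : ℝ) + (H : ℝ)) :=
  stmt7_general n ν η hη U H w c hwbot hwd1 hwd2 hc1 hc2
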